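/- arXiv:2107.06628 — 2 statements merged into one kernel-verified Lean document; each statement's English description precedes it below -/
import Mathlib

section
/- Let H₁, H₂ be separable complex Hilbert spaces, H = H₁ ⊗ H₂, (X, μ) = (X₁ × X₂, μ₁ ⊗ μ₂) the product of measure spaces with σ-finite positive measures, and let F and G be Bessel mappings for H with respect to (X, μ), at least one of which is norm bounded (there exists C > 0 with ‖F(x)‖ ≤ C for μ-a.e. x, or the same for G). If m : X → ℂ is an essentially bounded measurable function whose support has finite measure (there exists K ⊆ X with μ(K) < ∞ such that m(x) = 0 for μ-a.e. x ∈ X \ K), then the continuous Bessel multiplier M_{m,F,G} is a compact operator on H. -/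
open MeasureTheory ENNReal

noncomputable section

namespace ContFrame

variable {X : Type*} {H : Type*}

/-- The paper's inner product `⟨f, g⟩`: linear in the first argument and
conjugate-linear in the second (Mathlib's `inner` is conjugate-linear in the first). -/
def pinner [NormedAddCommGroup H] [InnerProductSpace ℂ H] (f g : H) : ℂ :=
  @inner ℂ _ _ g f

/-- `∫_X |⟨f, F x⟩|² dμ(x)`, as a lower integral. -/
def frameInt [MeasurableSpace X] [NormedAddCommGroup H] [InnerProductSpace ℂ H]
    (μ : Measure X) (F : X → H) (f : H) : ℝ≥0∞ :=
  ∫⁻ x, (‖pinner f (F x)‖₊ : ℝ≥0∞) ^ 2 ∂μ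

/-- `F` is weakly measurable: `x ↦ ⟨f, F x⟩` is μ-measurable for every `f`. -/
def WeaklyMeasurable [MeasurableSpace X] [NormedAddCommGroup H] [InnerProductSpace ℂ H]
    (μ : Measure X) (F : X → H) : Prop :=
  ∀ f : H, AEMeasurable (fun x => pinner f (F x)) μ

/-- `F` is a Bessel mapping for `H` w.r.t. `(X, μ)` with Bessel bound `B < ∞`. -/
def IsBesselMapping [MeasurableSpace X] [NormedAddCommGroup H] [InnerProductSpace ℂ H]
    (μ : Measure X) (F : X → H) (B : ℝ≥0∞) : Prop :=
  B < ⊤ ∧ WeaklyMeasurable μ F ∧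
    ∀ f : H, frameInt μ F f ≤ B * (‖f‖₊ : ℝ≥0∞) ^ 2

/-- `F` is a continuous frame for `H` w.r.t. `(X, μ)` with frame bounds `0 < A ≤ B < ∞`:
`A ‖f‖² ≤ ∫_X |⟨f, F x⟩|² dμ(x) ≤ B ‖f‖²` for all `f ∈ H`. -/
def IsContinuousFrame [MeasurableSpace X] [NormedAddCommGroup H] [InnerProductSpace ℂ H]
    (μ : Measure X) (F : X → H) (A B : ℝ≥0∞) : Prop :=
  0 < A ∧ A ≤ B ∧ B < ⊤ ∧ WeaklyMeasurable μ F ∧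
    ∀ f : H, A * (‖f‖₊ : ℝ≥0∞) ^ 2 ≤ frameInt μ F f ∧
      frameInt μ F f ≤ B * (‖f‖₊ : ℝ≥0∞) ^ 2

/-- A realization of the Hilbert tensor product `H = H₁ ⊗ H₂`: a bilinear map
`tmul` whose simple tensors satisfy `⟪a⊗b, c⊗d⟫ = ⟪a,c⟫⟪b,d⟫` and span a dense subspace. -/
structure HilbertTensorProduct (H₁ H₂ H : Type*)
    [NormedAddCommGroup H₁] [InnerProductSpace ℂ H₁]
    [NormedAddCommGroup H₂] [InnerProductSpace ℂ H₂]
    [NormedAddCommGroup H] [InnerProductSpace ℂ H] where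
  tmul : H₁ →ₗ[ℂ] H₂ →ₗ[ℂ] H
  inner_tmul : ∀ (a c : H₁) (b d : H₂),
    (inner ℂ (tmul a b) (tmul c d) : ℂ) = (inner ℂ a c : ℂ) * (inner ℂ b d : ℂ)
  dense_span : Dense (↑(Submodule.span ℂ {z : H | ∃ a b, z = tmul a b}) : Set H)

/-- `M` is the continuous Bessel multiplier `M_{m,F,G}`, defined weakly by
`⟨M f, g⟩ = ∫_X m(x) ⟨f, F x⟩ ⟨G x, g⟩ dμ(x)`. -/
def IsMultiplier {X H : Type*} [MeasurableSpace X]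
    [NormedAddCommGroup H] [InnerProductSpace ℂ H]
    (μ : Measure X) (m : X → ℂ) (F G : X → H) (M : H →L[ℂ] H) : Prop :=
  ∀ f g : H, pinner (M f) g = ∫ x, m x * pinner f (F x) * pinner (G x) g ∂μ

end ContFrame

/-!
Let `Pₙ` be the orthogonal projections onto an increasing sequence of finite-dimensional
subspaces with dense union (`H` is separable). Suppose `‖F‖ ≤ C` a.e. Then `M - M Pₙ` is the
multiplier with symbol `m` for `F - Pₙ F` and `G`, so Cauchy–Schwarz and the Bessel bound `B`
of `G` give `‖M - M Pₙ‖² ≤ B ∫ |m|² ‖F - Pₙ F‖² dμ`. The integrand tends to `0` pointwise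
and is dominated by `C² |m|²`, which is integrable because `m` is essentially bounded with
support of finite measure; so `M` is a norm limit of finite-rank operators. If instead `G`
is bounded, the same argument applies to `M* = M_{m̄,G,F}`. Weak measurability of `F` is
upgraded to strong measurability along the way, as `F = lim Pₙ F` pointwise.
-/

open Filter Topology
open scoped InnerProductSpace

section HilbertSpace

variable {𝕜 E : Type*} [RCLike 𝕜] [NormedAddCommGroup E] [InnerProductSpace 𝕜 E]

theorem exists_finiteDimensional_tendsto_starProjection [TopologicalSpace.SeparableSpace E] :
    ∃ (V : ℕ → Submodule 𝕜 E) (_ : ∀ n, FiniteDimensional 𝕜 (V n)),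
      ∀ y, Tendsto (fun n => (V n).starProjection y) atTop (𝓝 y) := by
  obtain ⟨D, hD⟩ := TopologicalSpace.exists_dense_seq E
  let V : ℕ → Submodule 𝕜 E := fun n => Submodule.span 𝕜 (D '' Set.Iio n)
  have hV : ∀ n, FiniteDimensional 𝕜 (V n) := fun n =>
    FiniteDimensional.span_of_finite 𝕜 ((Set.finite_Iio n).image D)
  have hmono : Monotone V := fun a b hab =>
    Submodule.span_mono (Set.image_mono (Set.Iio_subset_Iio hab))
  have hdense : ⊤ ≤ (⨆ n, V n).topologicalClosure := by
    have hD_le : Set.range D ⊆ (⨆ n, V n : Submodule 𝕜 E) := by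
      rintro _ ⟨j, rfl⟩
      exact Submodule.mem_iSup_of_mem (j + 1) (Submodule.subset_span ⟨j, j.lt_succ_self, rfl⟩)
    intro x _
    rw [← SetLike.mem_coe, Submodule.topologicalClosure_coe]
    exact closure_mono hD_le (hD.closure_eq ▸ Set.mem_univ x)
  exact ⟨V, hV, fun y => Submodule.starProjection_tendsto_self V hmono y hdense⟩

theorem Submodule.isCompactOperator_starProjection (U : Submodule 𝕜 E) [FiniteDimensional 𝕜 U] :
    IsCompactOperator U.starProjection :=
  (isCompactOperator_of_locallyCompactSpace_rng U.subtypeL).comp_clm U.orthogonalProjectionOnto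

theorem Submodule.norm_sub_starProjection_le (U : Submodule 𝕜 E) [U.HasOrthogonalProjection]
    (y : E) : ‖y - U.starProjection y‖ ≤ ‖y‖ := by
  rw [← Submodule.starProjection_orthogonal_val]
  simpa using Uᗮ.starProjection.le_of_opNorm_le Uᗮ.starProjection_norm_le y

theorem ContinuousLinearMap.opENorm_le_of_enorm_inner_le {T : E →L[𝕜] E} {c : ℝ≥0∞}
    (h : ∀ x y, ‖⟪T x, y⟫_𝕜‖ₑ ≤ c * ‖x‖ₑ * ‖y‖ₑ) : ‖T‖ₑ ≤ c := by
  refine T.opENorm_le_bound fun x => ?_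
  rcases eq_or_ne (T x) 0 with h0 | h0
  · simp [h0]
  have hsq : ‖T x‖ₑ * ‖T x‖ₑ ≤ c * ‖x‖ₑ * ‖T x‖ₑ := by
    simpa [inner_self_eq_norm_sq_to_K, ← ofReal_norm, sq] using h x (T x)
  exact (ENNReal.mul_le_mul_iff_left (enorm_ne_zero.mpr h0) enorm_ne_top).mp hsq

end HilbertSpace

section Lebesgue

variable {X : Type*} [MeasurableSpace X] {μ : Measure X}

theorem lintegral_enorm_mul_le {𝕜 : Type*} [RCLike 𝕜] {a b : X → 𝕜} (ha : AEMeasurable a μ)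
    (hb : AEMeasurable b μ) :
    ∫⁻ x, ‖a x * b x‖ₑ ∂μ ≤
      (∫⁻ x, ‖a x‖ₑ ^ 2 ∂μ) ^ (2⁻¹ : ℝ) * (∫⁻ x, ‖b x‖ₑ ^ 2 ∂μ) ^ (2⁻¹ : ℝ) := by
  have h := ENNReal.lintegral_mul_le_Lp_mul_Lq μ Real.HolderConjugate.two_two ha.enorm hb.enorm
  simp only [Pi.mul_apply, ENNReal.rpow_two, one_div] at h
  simpa only [enorm_mul] using h

theorem lintegral_enorm_sq_ne_top_of_memLp_top {E : Type*} [NormedAddCommGroup E] {m : X → E}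
    (hm : MemLp m ⊤ μ) {K : Set X} (hK : MeasurableSet K) (hμK : μ K ≠ ⊤)
    (hmK : ∀ᵐ x ∂μ, x ∉ K → m x = 0) :
    ∫⁻ x, ‖m x‖ₑ ^ 2 ∂μ ≠ ⊤ := by
  have hess : eLpNormEssSup m μ ≠ ⊤ := by simpa using hm.2.ne
  have hle : ∫⁻ x, ‖m x‖ₑ ^ 2 ∂μ ≤
      ∫⁻ x, K.indicator (fun _ => eLpNormEssSup m μ ^ 2) x ∂μ := by
    refine lintegral_mono_ae ?_
    filter_upwards [enorm_ae_le_eLpNormEssSup m μ, hmK] with x hx hxK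
    by_cases hx' : x ∈ K
    · simpa [hx'] using pow_le_pow_left' hx 2
    · simp [hx', hxK hx']
  rw [lintegral_indicator_const hK] at hle
  exact ne_top_of_le_ne_top (by finiteness) hle

theorem lintegral_enorm_sq_mul_ne_top_of_ae_norm_le {E E' : Type*} [NormedAddCommGroup E]
    [NormedAddCommGroup E'] {m : X → E} {F : X → E'} {C : ℝ} (hm : ∫⁻ x, ‖m x‖ₑ ^ 2 ∂μ ≠ ⊤)
    (hF : ∀ᵐ x ∂μ, ‖F x‖ ≤ C) :
    ∫⁻ x, ‖m x‖ₑ ^ 2 * ‖F x‖ₑ ^ 2 ∂μ ≠ ⊤ := by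
  have hle : ∫⁻ x, ‖m x‖ₑ ^ 2 * ‖F x‖ₑ ^ 2 ∂μ ≤
      ∫⁻ x, ‖m x‖ₑ ^ 2 * ENNReal.ofReal C ^ 2 ∂μ := by
    refine lintegral_mono_ae ?_
    filter_upwards [hF] with x hx
    gcongr
    simpa only [← ofReal_norm] using ENNReal.ofReal_le_ofReal hx
  rw [lintegral_mul_const' _ _ (by finiteness)] at hle
  exact ne_top_of_le_ne_top (by finiteness) hle

end Lebesgue

namespace ContFrame

variable {X H : Type*} [MeasurableSpace X] [NormedAddCommGroup H] [InnerProductSpace ℂ H]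
  {μ : Measure X}

theorem pinner_comm (a b : H) : pinner a b = starRingEnd ℂ (pinner b a) :=
  (inner_conj_symm _ _).symm

theorem enorm_pinner_comm (a b : H) : ‖pinner a b‖ₑ = ‖pinner b a‖ₑ := by
  rw [pinner_comm, RCLike.enorm_conj]

theorem WeaklyMeasurable.aemeasurable_pinner_left {F : X → H} (hF : WeaklyMeasurable μ F)
    (g : H) : AEMeasurable (fun x => pinner (F x) g) μ := by
  simp_rw [pinner_comm (F _)]
  exact Complex.continuous_conj.measurable.comp_aemeasurable (hF g)

theorem WeaklyMeasurable.aestronglyMeasurable {F : X → H} (hF : WeaklyMeasurable μ F)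
    {V : ℕ → Submodule ℂ H} [∀ n, FiniteDimensional ℂ (V n)]
    (hV : ∀ y, Tendsto (fun n => (V n).starProjection y) atTop (𝓝 y)) :
    AEStronglyMeasurable F μ := by
  refine aestronglyMeasurable_of_tendsto_ae atTop (fun n => ?_) (.of_forall fun x => hV (F x))
  let b := stdOrthonormalBasis ℂ (V n)
  have hsum : (fun x => (V n).starProjection (F x)) =
      fun x => ∑ i, pinner (F x) (b i) • (b i : H) := by
    ext x
    simp [Submodule.starProjection_apply, b.orthogonalProjectionOnto_apply_eq_sum, pinner]
  rw [hsum]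
  exact Finset.aestronglyMeasurable_fun_sum _ fun i _ =>
    (hF.aemeasurable_pinner_left _).aestronglyMeasurable.smul_const _

theorem IsBesselMapping.lintegral_enorm_pinner_left_sq_le {G : X → H} {B : ℝ≥0∞}
    (hG : IsBesselMapping μ G B) (g : H) :
    ∫⁻ x, ‖pinner (G x) g‖ₑ ^ 2 ∂μ ≤ B * ‖g‖ₑ ^ 2 := by
  simp_rw [enorm_pinner_comm (G _)]
  exact hG.2.2 g

theorem lintegral_enorm_mul_pinner_sq_le (m : X → ℂ) (F : X → H) (f : H) :
    ∫⁻ x, ‖m x * pinner f (F x)‖ₑ ^ 2 ∂μ ≤ (∫⁻ x, ‖m x‖ₑ ^ 2 * ‖F x‖ₑ ^ 2 ∂μ) * ‖f‖ₑ ^ 2 := by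
  rw [← lintegral_mul_const' _ _ (by simp)]
  refine lintegral_mono fun x => ?_
  rw [enorm_mul, mul_pow, mul_assoc, ← mul_pow ‖F x‖ₑ]
  gcongr
  simpa only [pinner, ← ofReal_norm, ← ENNReal.ofReal_mul (norm_nonneg _)] using
    ENNReal.ofReal_le_ofReal (norm_inner_le_norm (𝕜 := ℂ) (F x) f)

section Multiplier

variable {m : X → ℂ} {F G : X → H} {B : ℝ≥0∞}

theorem lintegral_enorm_multiplier_integrand_le (hm : AEMeasurable m μ)
    (hF : AEStronglyMeasurable F μ) (hG : IsBesselMapping μ G B) (f g : H) :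
    ∫⁻ x, ‖m x * pinner f (F x) * pinner (G x) g‖ₑ ∂μ ≤
      (∫⁻ x, ‖m x‖ₑ ^ 2 * ‖F x‖ₑ ^ 2 ∂μ) ^ (2⁻¹ : ℝ) * B ^ (2⁻¹ : ℝ) * (‖f‖ₑ * ‖g‖ₑ) := by
  have hsqrt : ∀ (c : ℝ≥0∞) (h : H), (c * ‖h‖ₑ ^ 2) ^ (2⁻¹ : ℝ) = c ^ (2⁻¹ : ℝ) * ‖h‖ₑ := by
    intro c h
    rw [ENNReal.mul_rpow_of_nonneg _ _ (by norm_num), ← ENNReal.rpow_two, ← ENNReal.rpow_mul]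
    norm_num
  have hmF : AEMeasurable (fun x => m x * pinner f (F x)) μ :=
    hm.mul (hF.inner aestronglyMeasurable_const).aemeasurable
  calc ∫⁻ x, ‖m x * pinner f (F x) * pinner (G x) g‖ₑ ∂μ
      ≤ (∫⁻ x, ‖m x * pinner f (F x)‖ₑ ^ 2 ∂μ) ^ (2⁻¹ : ℝ) *
          (∫⁻ x, ‖pinner (G x) g‖ₑ ^ 2 ∂μ) ^ (2⁻¹ : ℝ) :=
        lintegral_enorm_mul_le hmF (hG.2.1.aemeasurable_pinner_left g)
    _ ≤ ((∫⁻ x, ‖m x‖ₑ ^ 2 * ‖F x‖ₑ ^ 2 ∂μ) * ‖f‖ₑ ^ 2) ^ (2⁻¹ : ℝ) *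
          (B * ‖g‖ₑ ^ 2) ^ (2⁻¹ : ℝ) := by
        gcongr
        exacts [lintegral_enorm_mul_pinner_sq_le m F f, hG.lintegral_enorm_pinner_left_sq_le g]
    _ = _ := by rw [hsqrt, hsqrt]; ring

theorem integrable_multiplier_integrand (hm : AEMeasurable m μ) (hF : AEStronglyMeasurable F μ)
    (hmF : ∫⁻ x, ‖m x‖ₑ ^ 2 * ‖F x‖ₑ ^ 2 ∂μ ≠ ⊤) (hG : IsBesselMapping μ G B) (f g : H) :
    Integrable (fun x => m x * pinner f (F x) * pinner (G x) g) μ := by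
  refine ⟨(hm.mul (hF.inner aestronglyMeasurable_const).aemeasurable).mul
    (hG.2.1.aemeasurable_pinner_left g) |>.aestronglyMeasurable, ?_⟩
  refine (lintegral_enorm_multiplier_integrand_le hm hF hG f g).trans_lt ?_
  have hB := hG.1.ne
  finiteness

theorem IsMultiplier.opENorm_le {T : H →L[ℂ] H} (hT : IsMultiplier μ m F G T)
    (hm : AEMeasurable m μ) (hF : AEStronglyMeasurable F μ) (hG : IsBesselMapping μ G B) :
    ‖T‖ₑ ≤ (∫⁻ x, ‖m x‖ₑ ^ 2 * ‖F x‖ₑ ^ 2 ∂μ) ^ (2⁻¹ : ℝ) * B ^ (2⁻¹ : ℝ) := by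
  refine T.opENorm_le_of_enorm_inner_le fun f g => ?_
  rw [mul_assoc, ← inner_conj_symm, RCLike.enorm_conj]
  change ‖pinner (T f) g‖ₑ ≤ _
  rw [hT f g]
  exact (enorm_integral_le_lintegral_enorm _).trans
    (lintegral_enorm_multiplier_integrand_le hm hF hG f g)

theorem IsMultiplier.sub_comp {M P : H →L[ℂ] H} (hM : IsMultiplier μ m F G M)
    (hP : (P : H →ₗ[ℂ] H).IsSymmetric)
    (hint : ∀ f g, Integrable (fun x => m x * pinner f (F x) * pinner (G x) g) μ) :
    IsMultiplier μ m (fun x => F x - P (F x)) G (M - M ∘L P) := by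
  intro f g
  have hsub : pinner ((M - M ∘L P) f) g = pinner (M f) g - pinner (M (P f)) g :=
    inner_sub_right _ _ _
  rw [hsub, hM, hM, ← integral_sub (hint f g) (hint (P f) g)]
  congr 1 with x
  have hPF : pinner (P f) (F x) = pinner f (P (F x)) := (hP (F x) f).symm
  rw [hPF]
  simp only [pinner, inner_sub_left]
  ring

theorem IsMultiplier.adjoint [CompleteSpace H] {M : H →L[ℂ] H} (hM : IsMultiplier μ m F G M) :
    IsMultiplier μ (fun x => starRingEnd ℂ (m x)) G F (ContinuousLinearMap.adjoint M) := by
  intro f g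
  rw [pinner, ContinuousLinearMap.adjoint_inner_right, ← inner_conj_symm, ← pinner, hM,
    ← integral_conj]
  congr 1 with x
  simp only [map_mul, ← pinner_comm]
  ring

end Multiplier

section Approximation

variable {m : X → ℂ} {F G : X → H} {V : ℕ → Submodule ℂ H}
  [∀ n, FiniteDimensional ℂ (V n)]

theorem tendsto_lintegral_enorm_sq_mul_sub_starProjection (hm : AEMeasurable m μ)
    (hF : AEStronglyMeasurable F μ) (hmF : ∫⁻ x, ‖m x‖ₑ ^ 2 * ‖F x‖ₑ ^ 2 ∂μ ≠ ⊤)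
    (hV : ∀ y, Tendsto (fun n => (V n).starProjection y) atTop (𝓝 y)) :
    Tendsto (fun n => ∫⁻ x, ‖m x‖ₑ ^ 2 * ‖F x - (V n).starProjection (F x)‖ₑ ^ 2 ∂μ)
      atTop (𝓝 0) := by
  have hlim : ∀ x, Tendsto (fun n => ‖m x‖ₑ ^ 2 * ‖F x - (V n).starProjection (F x)‖ₑ ^ 2)
      atTop (𝓝 0) := by
    intro x
    have hnorm : Tendsto (fun n => ‖F x - (V n).starProjection (F x)‖ₑ) atTop (𝓝 0) :=
      (tendsto_iff_edist_tendsto_0.mp (hV (F x))).congr fun n => by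
        rw [edist_comm, edist_eq_enorm_sub]
    simpa using ENNReal.Tendsto.const_mul (ENNReal.Tendsto.pow hnorm (n := 2))
      (.inr (by finiteness))
  refine tendsto_lintegral_of_dominated_convergence' _ (fun n => ?_) (fun n => ?_) hmF
    (.of_forall hlim) |>.trans_eq (by simp)
  · exact (hm.enorm.pow_const 2).mul
      ((hF.sub ((V n).starProjection.continuous.comp_aestronglyMeasurable hF)).enorm.pow_const 2)
  · refine .of_forall fun x => ?_
    dsimp only
    gcongr
    simpa only [← ofReal_norm] using ENNReal.ofReal_le_ofReal ((V n).norm_sub_starProjection_le _)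

theorem IsMultiplier.tendsto_comp_starProjection {M : H →L[ℂ] H} {B : ℝ≥0∞}
    (hM : IsMultiplier μ m F G M) (hm : AEMeasurable m μ) (hF : WeaklyMeasurable μ F)
    (hmF : ∫⁻ x, ‖m x‖ₑ ^ 2 * ‖F x‖ₑ ^ 2 ∂μ ≠ ⊤) (hG : IsBesselMapping μ G B)
    (hV : ∀ y, Tendsto (fun n => (V n).starProjection y) atTop (𝓝 y)) :
    Tendsto (fun n => M ∘L (V n).starProjection) atTop (𝓝 M) := by
  have hFs := hF.aestronglyMeasurable hV
  have hdist : ∀ n, edist (M ∘L (V n).starProjection) M ≤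
      (∫⁻ x, ‖m x‖ₑ ^ 2 * ‖F x - (V n).starProjection (F x)‖ₑ ^ 2 ∂μ) ^ (2⁻¹ : ℝ) *
        B ^ (2⁻¹ : ℝ) := fun n => by
    rw [edist_comm, edist_eq_enorm_sub]
    exact (hM.sub_comp (V n).starProjection_isSymmetric
      (integrable_multiplier_integrand hm hFs hmF hG)).opENorm_le hm
      (hFs.sub ((V n).starProjection.continuous.comp_aestronglyMeasurable hFs)) hG
  have hlim := ENNReal.Tendsto.mul_const (b := B ^ (2⁻¹ : ℝ))
    (((ENNReal.continuous_rpow_const (y := 2⁻¹)).tendsto 0).comp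
      (tendsto_lintegral_enorm_sq_mul_sub_starProjection hm hFs hmF hV))
    (.inr (ENNReal.rpow_ne_top_of_nonneg (by norm_num) hG.1.ne))
  rw [tendsto_iff_edist_tendsto_0]
  exact tendsto_of_tendsto_of_tendsto_of_le_of_le tendsto_const_nhds
    (by simpa using hlim) (fun _ => zero_le) hdist

end Approximation

section Compactness

variable [CompleteSpace H] [TopologicalSpace.SeparableSpace H] {m : X → ℂ} {F G : X → H}
  {M : H →L[ℂ] H} {B : ℝ≥0∞}

theorem IsMultiplier.isCompactOperator_of_left (hM : IsMultiplier μ m F G M)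
    (hm : AEMeasurable m μ) (hF : WeaklyMeasurable μ F)
    (hmF : ∫⁻ x, ‖m x‖ₑ ^ 2 * ‖F x‖ₑ ^ 2 ∂μ ≠ ⊤) (hG : IsBesselMapping μ G B) :
    IsCompactOperator M := by
  obtain ⟨V, _, hV⟩ := exists_finiteDimensional_tendsto_starProjection (𝕜 := ℂ) (E := H)
  exact isCompactOperator_of_tendsto (hM.tendsto_comp_starProjection hm hF hmF hG hV)
    (.of_forall fun n => (V n).isCompactOperator_starProjection.clm_comp M)

theorem IsMultiplier.isCompactOperator_of_right (hM : IsMultiplier μ m F G M)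
    (hm : AEMeasurable m μ) (hG : WeaklyMeasurable μ G)
    (hmG : ∫⁻ x, ‖m x‖ₑ ^ 2 * ‖G x‖ₑ ^ 2 ∂μ ≠ ⊤) (hF : IsBesselMapping μ F B) :
    IsCompactOperator M := by
  obtain ⟨V, _, hV⟩ := exists_finiteDimensional_tendsto_starProjection (𝕜 := ℂ) (E := H)
  have hadj := hM.adjoint.tendsto_comp_starProjection
    (Complex.continuous_conj.measurable.comp_aemeasurable hm) hG (by simpa using hmG) hF hV
  -- taking adjoints turns `M† ∘ Pₙ → M†` into `Pₙ ∘ M → M`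
  have hlim : Tendsto (fun n => (V n).starProjection ∘L M) atTop (𝓝 M) := by
    simpa [Function.comp_def, ContinuousLinearMap.adjoint_comp,
      (isSelfAdjoint_starProjection _).adjoint_eq] using
      ((ContinuousLinearMap.adjoint (𝕜 := ℂ) (E := H) (F := H)).continuous.tendsto _).comp hadj
  exact isCompactOperator_of_tendsto hlim
    (.of_forall fun n => (V n).isCompactOperator_starProjection.comp_clm M)

end Compactness

theorem multiplier_compact_general
    {X₁ X₂ : Type*} [MeasurableSpace X₁] [MeasurableSpace X₂]
    {H : Type*}
    [NormedAddCommGroup H] [InnerProductSpace ℂ H] [CompleteSpace H]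
      [TopologicalSpace.SeparableSpace H]
    (μ₁ : Measure X₁) (μ₂ : Measure X₂)
    (F G : X₁ × X₂ → H) (BF BG : ℝ≥0∞)
    (hF : IsBesselMapping (μ₁.prod μ₂) F BF)
    (hG : IsBesselMapping (μ₁.prod μ₂) G BG)
    (hbdd : (∃ C > (0:ℝ), ∀ᵐ x ∂(μ₁.prod μ₂), ‖F x‖ ≤ C) ∨
            (∃ C > (0:ℝ), ∀ᵐ x ∂(μ₁.prod μ₂), ‖G x‖ ≤ C))
    (m : X₁ × X₂ → ℂ) (hm : MemLp m ⊤ (μ₁.prod μ₂))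
    (hsupp : ∃ K : Set (X₁ × X₂), MeasurableSet K ∧ (μ₁.prod μ₂) K < ⊤ ∧
      ∀ᵐ x ∂(μ₁.prod μ₂), x ∉ K → m x = 0)
    (M : H →L[ℂ] H) (hM : IsMultiplier (μ₁.prod μ₂) m F G M) :
    IsCompactOperator ⇑M := by
  obtain ⟨K, hK, hμK, hmK⟩ := hsupp
  have hm2 := lintegral_enorm_sq_ne_top_of_memLp_top hm hK hμK.ne hmK
  rcases hbdd with ⟨C, -, hFC⟩ | ⟨C, -, hGC⟩
  · exact hM.isCompactOperator_of_left hm.aemeasurable hF.2.1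
      (lintegral_enorm_sq_mul_ne_top_of_ae_norm_le hm2 hFC) hG
  · exact hM.isCompactOperator_of_right hm.aemeasurable hG.2.1
      (lintegral_enorm_sq_mul_ne_top_of_ae_norm_le hm2 hGC) hF

/-- If `F, G` are Bessel mappings for `H = H₁ ⊗ H₂` w.r.t. the product
measure, at least one of which is norm bounded, and `m` is an essentially bounded
measurable symbol whose support has finite measure, then the continuous Bessel
multiplier `M_{m,F,G}` is a compact operator on `H`. -/
theorem multiplier_compact
    {X₁ X₂ : Type*} [MeasurableSpace X₁] [MeasurableSpace X₂]
    {H₁ H₂ H : Type*}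
    [NormedAddCommGroup H₁] [InnerProductSpace ℂ H₁] [CompleteSpace H₁]
      [TopologicalSpace.SeparableSpace H₁]
    [NormedAddCommGroup H₂] [InnerProductSpace ℂ H₂] [CompleteSpace H₂]
      [TopologicalSpace.SeparableSpace H₂]
    [NormedAddCommGroup H] [InnerProductSpace ℂ H] [CompleteSpace H]
      [TopologicalSpace.SeparableSpace H]
    (μ₁ : Measure X₁) (μ₂ : Measure X₂) [SigmaFinite μ₁] [SigmaFinite μ₂]
    (tp : HilbertTensorProduct H₁ H₂ H)
    (F G : X₁ × X₂ → H) (BF BG : ℝ≥0∞)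
    (hF : IsBesselMapping (μ₁.prod μ₂) F BF)
    (hG : IsBesselMapping (μ₁.prod μ₂) G BG)
    (hbdd : (∃ C > (0:ℝ), ∀ᵐ x ∂(μ₁.prod μ₂), ‖F x‖ ≤ C) ∨
            (∃ C > (0:ℝ), ∀ᵐ x ∂(μ₁.prod μ₂), ‖G x‖ ≤ C))
    (m : X₁ × X₂ → ℂ) (hm : MemLp m ⊤ (μ₁.prod μ₂))
    (hsupp : ∃ K : Set (X₁ × X₂), MeasurableSet K ∧ (μ₁.prod μ₂) K < ⊤ ∧
      ∀ᵐ x ∂(μ₁.prod μ₂), x ∉ K → m x = 0)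
    (M : H →L[ℂ] H) (hM : IsMultiplier (μ₁.prod μ₂) m F G M) :
    IsCompactOperator ⇑M :=
  multiplier_compact_general μ₁ μ₂ F G BF BG hF hG hbdd m hm hsupp M hM

end ContFrame
end
end

section
/- Let H₁, H₂ be separable complex Hilbert spaces and (X, μ) = (X₁ × X₂, μ₁ ⊗ μ₂) the product of measure spaces with σ-finite positive measures. Let m_j be measurable functions on X_j and F_j, G_j Bessel mappings for H_j with respect to (X_j, μ_j), j = 1, 2, and set m = m₁ ⊗ m₂ (m(x₁,x₂) = m₁(x₁)m₂(x₂)), F = F₁ ⊗ F₂, G = G₁ ⊗ G₂. Assume M_{m,F,G} ∈ S₁(H₁ ⊗ H₂) and M_{m_j,F_j,G_j} ∈ S₁(H_j) for j = 1, 2. Then M_{m,F,G} = M_{m₁,F₁,G₁} ⊗ M_{m₂,F₂,G₂}, and the partial trace of M_{m,F,G} with respect to H₁ is the continuous Bessel multiplier T(M_{m₁,F₁,G₁} ⊗ M_{m₂,F₂,G₂}) = M_{m₁,F₁,G₁} · Tr_{H₂}(M_{m₂,F₂,G₂}); the analogous statement holds for the partial trace with respect to H₂. -/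
/-! On simple tensors the weak integral defining `M_{m,F,G}` factors by Fubini, because
`⟨u₁ ⊗ u₂, F₁ x₁ ⊗ F₂ x₂⟩ = ⟨u₁, F₁ x₁⟩ ⟨u₂, F₂ x₂⟩`: the matrix entry
`⟨M (u₁ ⊗ u₂), v₁ ⊗ v₂⟩` is `⟨M₁ u₁, v₁⟩ ⟨M₂ u₂, v₂⟩`, which is also the entry of `M₁ ⊗ M₂`.
Simple tensors span a dense subspace, so `M = M₁ ⊗ M₂`, and the partial trace formulas are
those of an elementary tensor. -/

open MeasureTheory ENNReal

noncomputable section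

namespace ContFrame

variable {X : Type*} {H : Type*}

/-- `∑_k |⟨f_k, T e_k⟩|^p` over finite orthonormal systems `(e_k)`, `(f_k)`;
the supremum of these quantities equals `‖T‖_{S_p}^p`. -/
def schattenSum {H : Type*} [NormedAddCommGroup H] [InnerProductSpace ℂ H]
    (p : ℝ) (T : H →L[ℂ] H) : ℝ≥0∞ :=
  ⨆ (n : ℕ) (e : Fin n → H) (f : Fin n → H)
    (_ : Orthonormal ℂ e) (_ : Orthonormal ℂ f),
      ENNReal.ofReal (∑ k, ‖pinner (f k) (T (e k))‖ ^ p)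

/-- The Schatten `p`-norm `‖T‖_{S_p}` (the `ℓ^p`-norm of the singular values). -/
def schattenNorm {H : Type*} [NormedAddCommGroup H] [InnerProductSpace ℂ H]
    (p : ℝ) (T : H →L[ℂ] H) : ℝ≥0∞ :=
  schattenSum p T ^ (1 / p)

/-- `T` belongs to the Schatten `p`-class `S_p(H)`: it is a compact operator whose
singular values lie in `ℓ^p`. -/
def MemSchatten {H : Type*} [NormedAddCommGroup H] [InnerProductSpace ℂ H]
    (p : ℝ) (T : H →L[ℂ] H) : Prop :=
  IsCompactOperator ⇑T ∧ schattenNorm p T < ⊤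

/-- `T` has trace `t`: `∑_i ⟨T b_i, b_i⟩ = t` for every orthonormal basis `(b_i)`. -/
def HasTrace {H : Type*} [NormedAddCommGroup H] [InnerProductSpace ℂ H]
    (T : H →L[ℂ] H) (t : ℂ) : Prop :=
  ∀ (ι : Type) (b : HilbertBasis ι ℂ H), HasSum (fun i => pinner (T (b i)) (b i)) t

namespace HilbertTensorProduct

variable {H₁ H₂ H : Type*}
  [NormedAddCommGroup H₁] [InnerProductSpace ℂ H₁]
  [NormedAddCommGroup H₂] [InnerProductSpace ℂ H₂]
  [NormedAddCommGroup H] [InnerProductSpace ℂ H]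
  (tp : HilbertTensorProduct H₁ H₂ H)

theorem pinner_tmul (a c : H₁) (b d : H₂) :
    pinner (tp.tmul a b) (tp.tmul c d) = pinner a c * pinner b d :=
  tp.inner_tmul c a d b

theorem eq_of_pinner_tmul {x y : H}
    (h : ∀ v₁ v₂, pinner x (tp.tmul v₁ v₂) = pinner y (tp.tmul v₁ v₂)) : x = y := by
  refine tp.dense_span.eq_of_inner_left (𝕜 := ℂ) fun v hv => ?_
  induction hv using Submodule.span_induction with
  | mem v hv =>
    obtain ⟨v₁, v₂, rfl⟩ := hv
    simpa [pinner] using congrArg (starRingEnd ℂ) (h v₁ v₂)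
  | zero => simp
  | add a b _ _ ha hb => rw [inner_add_right, inner_add_right, ha, hb]
  | smul c a _ ha => rw [inner_smul_right, inner_smul_right, ha]

theorem ext_of_pinner_tmul {A B : H →L[ℂ] H}
    (h : ∀ u₁ u₂ v₁ v₂, pinner (A (tp.tmul u₁ u₂)) (tp.tmul v₁ v₂) =
      pinner (B (tp.tmul u₁ u₂)) (tp.tmul v₁ v₂)) : A = B := by
  refine ContinuousLinearMap.ext_on tp.dense_span ?_
  rintro _ ⟨u₁, u₂, rfl⟩
  exact tp.eq_of_pinner_tmul (h u₁ u₂)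

end HilbertTensorProduct

namespace IsMultiplier

variable {X₁ X₂ H₁ H₂ H : Type*} [MeasurableSpace X₁] [MeasurableSpace X₂]
  [NormedAddCommGroup H₁] [InnerProductSpace ℂ H₁]
  [NormedAddCommGroup H₂] [InnerProductSpace ℂ H₂]
  [NormedAddCommGroup H] [InnerProductSpace ℂ H]
  {μ₁ : Measure X₁} {μ₂ : Measure X₂} [SFinite μ₁] [SFinite μ₂]
  {tp : HilbertTensorProduct H₁ H₂ H} {F₁ G₁ : X₁ → H₁} {F₂ G₂ : X₂ → H₂}
  {m₁ : X₁ → ℂ} {m₂ : X₂ → ℂ} {M₁ : H₁ →L[ℂ] H₁} {M₂ : H₂ →L[ℂ] H₂} {M : H →L[ℂ] H}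

theorem pinner_apply_tmul
    (hM : IsMultiplier (μ₁.prod μ₂) (fun x : X₁ × X₂ => m₁ x.1 * m₂ x.2)
      (fun x : X₁ × X₂ => tp.tmul (F₁ x.1) (F₂ x.2))
      (fun x : X₁ × X₂ => tp.tmul (G₁ x.1) (G₂ x.2)) M)
    (hM₁ : IsMultiplier μ₁ m₁ F₁ G₁ M₁) (hM₂ : IsMultiplier μ₂ m₂ F₂ G₂ M₂)
    (u₁ v₁ : H₁) (u₂ v₂ : H₂) :
    pinner (M (tp.tmul u₁ u₂)) (tp.tmul v₁ v₂) = pinner (M₁ u₁) v₁ * pinner (M₂ u₂) v₂ := by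
  rw [hM, hM₁, hM₂, ← integral_prod_mul]
  congr 1 with x
  simp only [tp.pinner_tmul]
  ring

theorem eq_of_apply_tmul
    (hM : IsMultiplier (μ₁.prod μ₂) (fun x : X₁ × X₂ => m₁ x.1 * m₂ x.2)
      (fun x : X₁ × X₂ => tp.tmul (F₁ x.1) (F₂ x.2))
      (fun x : X₁ × X₂ => tp.tmul (G₁ x.1) (G₂ x.2)) M)
    (hM₁ : IsMultiplier μ₁ m₁ F₁ G₁ M₁) (hM₂ : IsMultiplier μ₂ m₂ F₂ G₂ M₂)
    {T : H →L[ℂ] H} (hT : ∀ u₁ u₂, T (tp.tmul u₁ u₂) = tp.tmul (M₁ u₁) (M₂ u₂)) : M = T :=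
  tp.ext_of_pinner_tmul fun u₁ u₂ v₁ v₂ => by
    rw [hM.pinner_apply_tmul hM₁ hM₂, hT, tp.pinner_tmul]

end IsMultiplier

theorem multiplier_partialTrace_general
    {X₁ X₂ : Type*} [MeasurableSpace X₁] [MeasurableSpace X₂]
    {H₁ H₂ H : Type*}
    [NormedAddCommGroup H₁] [InnerProductSpace ℂ H₁]
    [NormedAddCommGroup H₂] [InnerProductSpace ℂ H₂]
    [NormedAddCommGroup H] [InnerProductSpace ℂ H]
    (μ₁ : Measure X₁) (μ₂ : Measure X₂) [SigmaFinite μ₁] [SigmaFinite μ₂]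
    (tp : HilbertTensorProduct H₁ H₂ H)
    (F₁ G₁ : X₁ → H₁) (F₂ G₂ : X₂ → H₂)
    (m₁ : X₁ → ℂ) (m₂ : X₂ → ℂ)
    -- the multipliers on the factors and on the tensor product
    (M₁ : H₁ →L[ℂ] H₁) (hM₁ : IsMultiplier μ₁ m₁ F₁ G₁ M₁)
    (M₂ : H₂ →L[ℂ] H₂) (hM₂ : IsMultiplier μ₂ m₂ F₂ G₂ M₂)
    (M : H →L[ℂ] H)
    (hM : IsMultiplier (μ₁.prod μ₂) (fun x : X₁ × X₂ => m₁ x.1 * m₂ x.2)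
      (fun x : X₁ × X₂ => tp.tmul (F₁ x.1) (F₂ x.2))
      (fun x : X₁ × X₂ => tp.tmul (G₁ x.1) (G₂ x.2)) M)
    -- trace class assumptions
    (hS₁ : MemSchatten 1 M₁) (hS₂ : MemSchatten 1 M₂)
    (t₁ t₂ : ℂ) (ht₁ : HasTrace M₁ t₁) (ht₂ : HasTrace M₂ t₂)
    -- the tensor product of operators, characterized on simple tensors
    (TProd : (H₁ →L[ℂ] H₁) → (H₂ →L[ℂ] H₂) → (H →L[ℂ] H))
    (hTProd : ∀ (A₁ : H₁ →L[ℂ] H₁) (A₂ : H₂ →L[ℂ] H₂) (u : H₁) (v : H₂),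
      TProd A₁ A₂ (tp.tmul u v) = tp.tmul (A₁ u) (A₂ v))
    -- the partial traces w.r.t. `H₁` and `H₂`
    (ptrL : (H →L[ℂ] H) → (H₁ →L[ℂ] H₁))
    (hptrL : ∀ (A₁ : H₁ →L[ℂ] H₁) (A₂ : H₂ →L[ℂ] H₂), MemSchatten 1 A₁ →
      MemSchatten 1 A₂ → ∀ t : ℂ, HasTrace A₂ t → ptrL (TProd A₁ A₂) = t • A₁)
    (ptrR : (H →L[ℂ] H) → (H₂ →L[ℂ] H₂))
    (hptrR : ∀ (A₁ : H₁ →L[ℂ] H₁) (A₂ : H₂ →L[ℂ] H₂), MemSchatten 1 A₁ →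
      MemSchatten 1 A₂ → ∀ t : ℂ, HasTrace A₁ t → ptrR (TProd A₁ A₂) = t • A₂) :
    M = TProd M₁ M₂ ∧ ptrL M = t₂ • M₁ ∧ ptrR M = t₁ • M₂ := by
  obtain rfl : M = TProd M₁ M₂ := hM.eq_of_apply_tmul hM₁ hM₂ (hTProd M₁ M₂)
  exact ⟨rfl, hptrL M₁ M₂ hS₁ hS₂ t₂ ht₂, hptrR M₁ M₂ hS₁ hS₂ t₁ ht₁⟩

/-- For tensor product symbols `m = m₁ ⊗ m₂` and Bessel mappings
`F = F₁ ⊗ F₂`, `G = G₁ ⊗ G₂`, if `M_{m,F,G}` and `M_{m_j,F_j,G_j}` are trace class,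
then `M_{m,F,G} = M_{m₁,F₁,G₁} ⊗ M_{m₂,F₂,G₂}` and the partial trace of `M_{m,F,G}`
w.r.t. `H₁` is `M_{m₁,F₁,G₁} · Tr_{H₂}(M_{m₂,F₂,G₂})`; analogously for `H₂`. -/
theorem multiplier_partialTrace
    {X₁ X₂ : Type*} [MeasurableSpace X₁] [MeasurableSpace X₂]
    {H₁ H₂ H : Type*}
    [NormedAddCommGroup H₁] [InnerProductSpace ℂ H₁] [CompleteSpace H₁]
      [TopologicalSpace.SeparableSpace H₁]
    [NormedAddCommGroup H₂] [InnerProductSpace ℂ H₂] [CompleteSpace H₂]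
      [TopologicalSpace.SeparableSpace H₂]
    [NormedAddCommGroup H] [InnerProductSpace ℂ H] [CompleteSpace H]
      [TopologicalSpace.SeparableSpace H]
    (μ₁ : Measure X₁) (μ₂ : Measure X₂) [SigmaFinite μ₁] [SigmaFinite μ₂]
    (tp : HilbertTensorProduct H₁ H₂ H)
    (F₁ G₁ : X₁ → H₁) (F₂ G₂ : X₂ → H₂) (BF₁ BG₁ BF₂ BG₂ : ℝ≥0∞)
    (hF₁ : IsBesselMapping μ₁ F₁ BF₁) (hG₁ : IsBesselMapping μ₁ G₁ BG₁)
    (hF₂ : IsBesselMapping μ₂ F₂ BF₂) (hG₂ : IsBesselMapping μ₂ G₂ BG₂)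
    (m₁ : X₁ → ℂ) (m₂ : X₂ → ℂ)
    -- the multipliers on the factors and on the tensor product
    (M₁ : H₁ →L[ℂ] H₁) (hM₁ : IsMultiplier μ₁ m₁ F₁ G₁ M₁)
    (M₂ : H₂ →L[ℂ] H₂) (hM₂ : IsMultiplier μ₂ m₂ F₂ G₂ M₂)
    (M : H →L[ℂ] H)
    (hM : IsMultiplier (μ₁.prod μ₂) (fun x : X₁ × X₂ => m₁ x.1 * m₂ x.2)
      (fun x : X₁ × X₂ => tp.tmul (F₁ x.1) (F₂ x.2))
      (fun x : X₁ × X₂ => tp.tmul (G₁ x.1) (G₂ x.2)) M)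
    -- the defining weak integrals converge absolutely
    (hI₁ : ∀ f g : H₁, Integrable (fun x => m₁ x * pinner f (F₁ x) * pinner (G₁ x) g) μ₁)
    (hI₂ : ∀ f g : H₂, Integrable (fun x => m₂ x * pinner f (F₂ x) * pinner (G₂ x) g) μ₂)
    -- trace class assumptions
    (hS : MemSchatten 1 M) (hS₁ : MemSchatten 1 M₁) (hS₂ : MemSchatten 1 M₂)
    (t₁ t₂ : ℂ) (ht₁ : HasTrace M₁ t₁) (ht₂ : HasTrace M₂ t₂)
    -- the tensor product of operators, characterized on simple tensors
    (TProd : (H₁ →L[ℂ] H₁) → (H₂ →L[ℂ] H₂) → (H →L[ℂ] H))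
    (hTProd : ∀ (A₁ : H₁ →L[ℂ] H₁) (A₂ : H₂ →L[ℂ] H₂) (u : H₁) (v : H₂),
      TProd A₁ A₂ (tp.tmul u v) = tp.tmul (A₁ u) (A₂ v))
    -- the partial traces w.r.t. `H₁` and `H₂`
    (ptrL : (H →L[ℂ] H) → (H₁ →L[ℂ] H₁))
    (hptrL : ∀ (A₁ : H₁ →L[ℂ] H₁) (A₂ : H₂ →L[ℂ] H₂), MemSchatten 1 A₁ →
      MemSchatten 1 A₂ → ∀ t : ℂ, HasTrace A₂ t → ptrL (TProd A₁ A₂) = t • A₁)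
    (ptrR : (H →L[ℂ] H) → (H₂ →L[ℂ] H₂))
    (hptrR : ∀ (A₁ : H₁ →L[ℂ] H₁) (A₂ : H₂ →L[ℂ] H₂), MemSchatten 1 A₁ →
      MemSchatten 1 A₂ → ∀ t : ℂ, HasTrace A₁ t → ptrR (TProd A₁ A₂) = t • A₂) :
    M = TProd M₁ M₂ ∧ ptrL M = t₂ • M₁ ∧ ptrR M = t₁ • M₂ :=
  multiplier_partialTrace_general μ₁ μ₂ tp F₁ G₁ F₂ G₂ m₁ m₂ M₁ hM₁ M₂ hM₂ M hM hS₁ hS₂ t₁ t₂ ht₁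
    ht₂ TProd hTProd ptrL hptrL ptrR hptrR

end ContFrame
end
end
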